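/- arXiv:math/0311398 — 2 statements merged into one kernel-verified Lean document; each statement's English description precedes it below -/
import Mathlib

section
/- Let X be a length space, q ∈ X, δ > 0, and let C : [0,L] → X be a rectifiable loop whose image is contained in the open ball B(q, δ). Then C is freely homotopic (within X) to a finite product of loops based at q, each of length strictly less than 2δ. -/
open Metric

/-- The length of a path in a metric space, as its total variation. -/
noncomputable def pathLength {X : Type*} [MetricSpace X] {x y : X} (γ : Path x y) : ENNReal :=
  eVariationOn (fun t => γ t) Set.univ

/-- A metric space is a length space if the distance between any two points is the
infimum of the lengths of paths joining them. -/
def IsLengthSpace (X : Type*) [MetricSpace X] : Prop :=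
  ∀ x y : X, ∀ ε > 0, ∃ γ : Path x y, pathLength γ < ENNReal.ofReal (dist x y + ε)

/-- Two loops are freely homotopic if they are homotopic through loops,
without fixing a base point. -/
def FreelyHomotopicLoops {X : Type*} [TopologicalSpace X] {x y : X}
    (α : Path x x) (β : Path y y) : Prop :=
  ∃ H : C(unitInterval × unitInterval, X),
    (∀ t, H (0, t) = α t) ∧ (∀ t, H (1, t) = β t) ∧ ∀ s, H (s, 0) = H (s, 1)

/-- The concatenation of a finite list of loops based at `q`. -/
noncomputable def loopProduct {X : Type*} [TopologicalSpace X] {q : X} :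
    List (Path q q) → Path q q
  | [] => Path.refl q
  | p :: l => p.trans (loopProduct l)

/-!
The image of `C` is compact, so it lies in a closed ball `closedBall q r` with `r < δ`. Join `q`
to every point `y` by a path `s y` of length `< dist q y + (δ - r) / 2`. The variation of `C` on
`[0, t]` is continuous in `t`, so a fine uniform partition `tₖ` cuts `C` into arcs of length
`< δ - r`, and each lasso `s (C tₖ) · C|[tₖ, tₖ₊₁] · (s (C tₖ₊₁))⁻¹` has length `< 2δ`. Their
product telescopes, up to homotopy, to `s x · C · (s x)⁻¹`, and sliding the base point back along
`s x` is a free homotopy to `C`.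
-/

open Set unitInterval

theorem IsCompact.exists_lt_subset_closedBall {X : Type*} [PseudoMetricSpace X] {s : Set X}
    (hs : IsCompact s) {x : X} {r : ℝ} (h : s ⊆ ball x r) : ∃ r' < r, s ⊆ closedBall x r' := by
  rcases s.eq_empty_or_nonempty with rfl | hne
  · exact ⟨r - 1, by linarith, empty_subset _⟩
  obtain ⟨y, hy, hmax⟩ := hs.exists_isMaxOn hne (continuous_id.dist continuous_const).continuousOn
  exact ⟨dist y x, h hy, fun z hz => hmax hz⟩

section FreeHomotopy

variable {X : Type*} [TopologicalSpace X]

theorem freelyHomotopicLoops_of_continuous_family {a : I → X} (γ : ∀ s, Path (a s) (a s))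
    (hγ : Continuous ↿γ) {x y : X} {α : Path x x} {β : Path y y} (h₀ : ⇑(γ 0) = α)
    (h₁ : ⇑(γ 1) = β) : FreelyHomotopicLoops α β :=
  ⟨⟨↿γ, hγ⟩, congrFun h₀, congrFun h₁, fun s => (γ s).source.trans (γ s).target.symm⟩

theorem Path.Homotopic.freelyHomotopicLoops {x : X} {α β : Path x x} (h : α.Homotopic β) :
    FreelyHomotopicLoops α β := by
  obtain ⟨F⟩ := h
  exact ⟨F.toContinuousMap, F.apply_zero, F.apply_one,
    fun s => (F.source s).trans (F.target s).symm⟩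

theorem FreelyHomotopicLoops.trans {x y z : X} {α : Path x x} {β : Path y y} {γ : Path z z}
    (h₁ : FreelyHomotopicLoops α β) (h₂ : FreelyHomotopicLoops β γ) :
    FreelyHomotopicLoops α γ := by
  obtain ⟨F, hF₀, hF₁, hF⟩ := h₁
  obtain ⟨G, hG₀, hG₁, hG⟩ := h₂
  let F' : ContinuousMap.Homotopy α.toContinuousMap β.toContinuousMap := ⟨F, hF₀, hF₁⟩
  let G' : ContinuousMap.Homotopy β.toContinuousMap γ.toContinuousMap := ⟨G, hG₀, hG₁⟩
  refine ⟨(F'.trans G').toContinuousMap, (F'.trans G').apply_zero, (F'.trans G').apply_one,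
    fun s => ?_⟩
  change F'.trans G' (s, 0) = F'.trans G' (s, 1)
  simp only [ContinuousMap.Homotopy.trans_apply]
  split_ifs
  exacts [hF _, hG _]

theorem freelyHomotopicLoops_trans_trans_symm {q x : X} (γ : Path x x) (ρ : Path q x) :
    FreelyHomotopicLoops γ (ρ.trans (γ.trans ρ.symm)) := by
  let τ (s : I) := ρ.truncate (1 - s) 1
  have hτ : ρ.extend 1 = x := ρ.extend_one
  let loop (s : I) := (τ s).trans ((γ.cast hτ hτ).trans (τ s).symm)
  have hτc : Continuous ↿τ :=
    ρ.truncate_continuous_family.comp (f := fun p : I × I => (1 - (p.1 : ℝ), (1 : ℝ), p.2))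
      (by fun_prop)
  have hloop : Continuous ↿loop :=
    Path.trans_continuous_family _ hτc _ <| Path.trans_continuous_family _
      (γ.continuous.comp continuous_snd) _ (Path.symm_continuous_family _ hτc)
  have hloop₀ : ⇑(loop 0) = ⇑((Path.refl x).trans (γ.trans (Path.refl x))) := by
    funext t
    simp [loop, τ, Path.trans_apply, Path.truncate]
  have hloop₁ : ⇑(loop 1) = ⇑(ρ.trans (γ.trans ρ.symm)) := by
    change ⇑((ρ.truncate (1 - 1) 1).trans ((γ.cast hτ hτ).trans (ρ.truncate (1 - 1) 1).symm)) = _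
    -- `1 - 1` also occurs in the endpoint types, so it is generalized rather than rewritten.
    generalize ha : (1 : ℝ) - 1 = a
    obtain rfl : a = 0 := by rw [← ha, sub_self]
    rw [Path.truncate_zero_one, ← Path.cast_symm, ← Path.cast_trans, ← Path.cast_trans]
    rfl
  exact ((Path.Homotopic.refl_trans _).trans (Path.Homotopic.trans_refl γ)).symm
    |>.freelyHomotopicLoops.trans (freelyHomotopicLoops_of_continuous_family loop hloop hloop₀ hloop₁)

end FreeHomotopy

section PathLength

variable {X : Type*} [MetricSpace X] {x y z : X}

theorem pathLength_eq_eVariationOn_extend (γ : Path x y) :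
    pathLength γ = eVariationOn γ.extend univ := by
  apply le_antisymm
  · have : (fun t : I => γ t) = γ.extend ∘ Subtype.val :=
      funext fun t => (γ.extend_extends' t).symm
    rw [pathLength, this]
    exact eVariationOn.comp_le_of_monotoneOn _ _ (fun _ _ _ _ h => h) (mapsTo_univ _ _)
  · exact eVariationOn.comp_le_of_monotoneOn (fun t : I => γ t) (projIcc 0 1 zero_le_one)
      ((monotone_projIcc _).monotoneOn _) (mapsTo_univ _ _)

theorem pathLength_symm_le (γ : Path x y) : pathLength γ.symm ≤ pathLength γ := by
  simp only [pathLength_eq_eVariationOn_extend]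
  have : γ.symm.extend = γ.extend ∘ fun t => 1 - t := funext γ.extend_symm_apply
  rw [this]
  exact eVariationOn.comp_le_of_antitoneOn _ _ (fun _ _ _ _ h => sub_le_sub_left h 1)
    (mapsTo_univ _ _)

theorem pathLength_trans_le (γ : Path x y) (γ' : Path y z) :
    pathLength (γ.trans γ') ≤ pathLength γ + pathLength γ' := by
  simp only [pathLength_eq_eVariationOn_extend]
  rw [← Iic_union_Ici (a := (1 / 2 : ℝ)), eVariationOn.union _ isGreatest_Iic isLeast_Ici,
    Iic_union_Ici]
  gcongr
  · rw [eVariationOn.eq_of_eqOn (s := Iic (1 / 2)) (f' := γ.extend ∘ fun t => 2 * t)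
      fun t ht => γ.extend_trans_of_le_half γ' ht]
    exact eVariationOn.comp_le_of_monotoneOn _ _ (fun _ _ _ _ h => by linarith)
      (mapsTo_univ _ _)
  · rw [eVariationOn.eq_of_eqOn (s := Ici (1 / 2)) (f' := γ'.extend ∘ fun t => 2 * t - 1)
      fun t ht => γ.extend_trans_of_half_le γ' ht]
    exact eVariationOn.comp_le_of_monotoneOn _ _ (fun _ _ _ _ h => by linarith)
      (mapsTo_univ _ _)

end PathLength

section Variation

variable {E : Type*} [PseudoMetricSpace E]

theorem BoundedVariationOn.continuous_variationOnFromTo {α : Type*} [LinearOrder α]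
    [TopologicalSpace α] [OrderTopology α] {f : α → E} (hf : BoundedVariationOn f univ)
    (hc : Continuous f) (a : α) : Continuous (variationOnFromTo f univ a) := by
  refine continuous_iff_continuousAt.2 fun b => continuousAt_iff_continuous_left_right.2 ⟨?_, ?_⟩
  · rw [← continuousWithinAt_Iio_iff_Iic]
    have := variationOnFromTo.tendsto_left (mem_univ a) (mem_univ b)
      hf.locallyBoundedVariationOn (hc.continuousWithinAt (s := univ ∩ Iio b) (x := b))
    simpa [ContinuousWithinAt] using this
  · exact hf.continuousWithinAt_variationOnFromTo_Ici hc.continuousWithinAt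

theorem BoundedVariationOn.exists_pos_eVariationOn_Icc_lt {f : ℝ → E}
    (hf : BoundedVariationOn f univ) (hc : Continuous f) {K : Set ℝ} (hK : IsCompact K) {ε : ℝ}
    (hε : 0 < ε) :
    ∃ η > 0, ∀ a ∈ K, ∀ b ∈ K, a ≤ b → b - a < η → eVariationOn f (Icc a b) < ENNReal.ofReal ε := by
  obtain ⟨η, hη, hφ⟩ := Metric.uniformContinuousOn_iff.1
    (hK.uniformContinuousOn_of_continuous (hf.continuous_variationOnFromTo hc 0).continuousOn) ε hε
  refine ⟨η, hη, fun a ha b hb hab hbη => ?_⟩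
  have hfin : eVariationOn f (Icc a b) ≠ ⊤ :=
    ne_top_of_le_ne_top hf (eVariationOn.mono f (subset_univ _))
  have hdist := hφ b hb a ha (by rwa [Real.dist_eq, abs_of_nonneg (by linarith)])
  rw [Real.dist_eq, variationOnFromTo.sub_right hf.locallyBoundedVariationOn (mem_univ _)
    (mem_univ _) (mem_univ _), variationOnFromTo.eq_of_le f univ hab, univ_inter,
    ENNReal.abs_toReal] at hdist
  exact (ENNReal.lt_ofReal_iff_toReal_lt hfin).2 hdist

theorem BoundedVariationOn.exists_uniform_partition_eVariationOn_lt {f : ℝ → E}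
    (hf : BoundedVariationOn f univ) (hc : Continuous f) {ε : ℝ} (hε : 0 < ε) :
    ∃ n : ℕ, 0 < n ∧ ∀ k < n, eVariationOn f (Icc (k / n) ((k + 1) / n)) < ENNReal.ofReal ε := by
  obtain ⟨η, hη, hvar⟩ :=
    hf.exists_pos_eVariationOn_Icc_lt hc (isCompact_Icc (a := (0 : ℝ)) (b := 1)) hε
  obtain ⟨N, hN⟩ := exists_nat_one_div_lt hη
  have hN₀ : (0 : ℝ) < N + 1 := N.cast_add_one_pos
  refine ⟨N + 1, N.succ_pos, fun k hk => ?_⟩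
  have hk' : (k : ℝ) + 1 ≤ N + 1 := by exact_mod_cast hk
  push_cast
  refine hvar _ ⟨by positivity, ?_⟩ _ ⟨by positivity, ?_⟩ (by gcongr; linarith) ?_
  · rw [div_le_one hN₀]
    linarith
  · rwa [div_le_one hN₀]
  · rwa [← sub_div, add_sub_cancel_left]

end Variation

namespace ContinuousMap

section Subpath

variable {X : Type*} [TopologicalSpace X] (f : C(ℝ, X))

noncomputable def subpath (a b : ℝ) : Path (f a) (f b) :=
  (Path.segment a b).map f.continuous

@[simp]
theorem subpath_self (a : ℝ) : f.subpath a a = Path.refl (f a) := by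
  ext
  simp [subpath]

theorem subpath_trans_subpath_homotopic (a b c : ℝ) :
    ((f.subpath a b).trans (f.subpath b c)).Homotopic (f.subpath a c) := by
  rw [subpath, subpath, ← Path.map_trans]
  exact (SimplyConnectedSpace.paths_homotopic _ _).map f

theorem _root_.Path.subpath_extend_zero_one {x y : X} (γ : Path x y) :
    (⟨γ.extend, γ.continuous_extend⟩ : C(ℝ, X)).subpath 0 1 =
      γ.cast γ.extend_zero γ.extend_one := by
  ext t
  simp [subpath, AffineMap.lineMap_apply_module]

variable {q : X} (s : ∀ y, Path q y)

noncomputable def subpathLoop (a b : ℝ) : Path q q :=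
  (s (f a)).trans ((f.subpath a b).trans (s (f b)).symm)

open Path.Homotopic.Quotient in
theorem subpathLoop_trans_homotopic (a b c : ℝ) :
    ((f.subpathLoop s a b).trans (f.subpathLoop s b c)).Homotopic (f.subpathLoop s a c) := by
  rw [← Path.Homotopic.Quotient.eq]
  simp only [subpathLoop, mk_trans, mk_symm]
  rw [← (Path.Homotopic.Quotient.eq).2 (f.subpath_trans_subpath_homotopic a b c)]
  simp only [mk_trans, trans_assoc]
  rw [← trans_assoc (symm _), symm_trans, refl_trans]

theorem subpathLoop_self_homotopic (a : ℝ) : (f.subpathLoop s a a).Homotopic (Path.refl q) := by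
  rw [← Path.Homotopic.Quotient.eq]
  simp [subpathLoop, Path.Homotopic.Quotient.mk_trans]

theorem loopProduct_subpathLoop_homotopic (t : ℕ → ℝ) (m n : ℕ) :
    (loopProduct ((List.range' m n).map fun k => f.subpathLoop s (t k) (t (k + 1)))).Homotopic
      (f.subpathLoop s (t m) (t (m + n))) := by
  induction n generalizing m with
  | zero => exact (f.subpathLoop_self_homotopic s _).symm
  | succ n ih =>
    rw [List.range'_succ, List.map_cons, loopProduct, ← add_assoc, add_right_comm]
    exact ((Path.Homotopic.refl _).hcomp (ih (m + 1))).trans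
      (f.subpathLoop_trans_homotopic s _ _ _)

theorem _root_.Path.subpathLoop_extend_zero_one {x y : X} (γ : Path x y) :
    (⟨γ.extend, γ.continuous_extend⟩ : C(ℝ, X)).subpathLoop s 0 1 =
      (s x).trans (γ.trans (s y).symm) := by
  have key : ∀ {a b} (ha : a = x) (hb : b = y),
      (s a).trans ((γ.cast ha hb).trans (s b).symm) = (s x).trans (γ.trans (s y).symm) := by
    rintro _ _ rfl rfl
    rfl
  rw [subpathLoop, γ.subpath_extend_zero_one]
  exact key _ _

end Subpath

section Length

variable {X : Type*} [MetricSpace X] (f : C(ℝ, X))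

theorem pathLength_subpath_le {a b : ℝ} (hab : a ≤ b) :
    pathLength (f.subpath a b) ≤ eVariationOn f (Icc a b) :=
  eVariationOn.comp_le_of_monotoneOn f (fun t : I => AffineMap.lineMap a b (t : ℝ))
    (fun _ _ _ _ h => AffineMap.lineMap_mono hab h)
    fun t _ => (convex_Icc a b).lineMap_mem (left_mem_Icc.2 hab) (right_mem_Icc.2 hab) t.2

theorem pathLength_subpathLoop_le {q : X} (s : ∀ y, Path q y) {a b : ℝ} (hab : a ≤ b) :
    pathLength (f.subpathLoop s a b) ≤
      pathLength (s (f a)) + (eVariationOn f (Icc a b) + pathLength (s (f b))) := by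
  refine (pathLength_trans_le _ _).trans (add_le_add_right ?_ _)
  exact (pathLength_trans_le _ _).trans
    (add_le_add (f.pathLength_subpath_le hab) (pathLength_symm_le _))

theorem exists_loopProduct_homotopic_subpathLoop (hf : BoundedVariationOn f univ) {q : X}
    (s : ∀ y, Path q y) {B : ENNReal} (hs : ∀ u, pathLength (s (f u)) < B) {ε : ℝ} (hε : 0 < ε) :
    ∃ L : List (Path q q), (∀ p ∈ L, pathLength p < B + (ENNReal.ofReal ε + B)) ∧
      (loopProduct L).Homotopic (f.subpathLoop s 0 1) := by
  obtain ⟨n, hn, hvar⟩ := hf.exists_uniform_partition_eVariationOn_lt f.continuous hε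
  refine ⟨(List.range' 0 n).map fun k : ℕ => f.subpathLoop s (k / n) ((k + 1 : ℕ) / n), ?_, ?_⟩
  · simp only [List.mem_map, List.mem_range'_1]
    rintro _ ⟨k, ⟨-, hk⟩, rfl⟩
    have hle : (k : ℝ) / n ≤ ((k + 1 : ℕ) : ℝ) / n := by gcongr; simp
    refine (f.pathLength_subpathLoop_le s hle).trans_lt
      (ENNReal.add_lt_add (hs _) (ENNReal.add_lt_add ?_ (hs _)))
    simpa using hvar k (by omega)
  · simpa [hn.ne'] using f.loopProduct_subpathLoop_homotopic s (fun k => k / n) 0 n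

end Length

end ContinuousMap

theorem loop_in_ball_freely_homotopic_to_product_of_short_loops_general
    {X : Type*} [MetricSpace X] (hX : IsLengthSpace X)
    (q : X) (δ : ℝ) {x : X} (C : Path x x)
    (hrect : pathLength C < ⊤)
    (himage : Set.range C ⊆ ball q δ) :
    ∃ L : List (Path q q), (∀ p ∈ L, pathLength p < ENNReal.ofReal (2 * δ)) ∧
      FreelyHomotopicLoops C (loopProduct L) := by
  obtain ⟨r, hrδ, hr⟩ := (isCompact_range C.continuous).exists_lt_subset_closedBall himage
  have hr₀ : 0 ≤ r := dist_nonneg.trans (hr (mem_range_self 0))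
  have hε : 0 < (δ - r) / 2 := by linarith
  choose s hs using fun y => hX q y _ hε
  let f : C(ℝ, X) := ⟨C.extend, C.continuous_extend⟩
  have hsf (u : ℝ) : pathLength (s (f u)) < ENNReal.ofReal (r + (δ - r) / 2) := by
    refine (hs _).trans_le (ENNReal.ofReal_le_ofReal ?_)
    have := hr (C.extend_range ▸ mem_range_self u : f u ∈ range C)
    rw [mem_closedBall, dist_comm] at this
    linarith
  have hf : BoundedVariationOn f univ := (pathLength_eq_eVariationOn_extend C ▸ hrect).ne
  obtain ⟨L, hL, hhom⟩ := f.exists_loopProduct_homotopic_subpathLoop hf s hsf (sub_pos.2 hrδ)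
  refine ⟨L, fun p hp => (hL p hp).trans_eq ?_, ?_⟩
  · rw [← ENNReal.ofReal_add (by linarith) (by linarith),
      ← ENNReal.ofReal_add (by linarith) (by linarith)]
    ring_nf
  · rw [C.subpathLoop_extend_zero_one] at hhom
    exact (freelyHomotopicLoops_trans_trans_symm C (s x)).trans hhom.symm.freelyHomotopicLoops

/-- In a complete length space, a rectifiable loop whose image lies in an
open ball `B(q, δ)` is freely homotopic to a finite product of loops based at `q`,
each of length strictly less than `2δ`. -/
theorem loop_in_ball_freely_homotopic_to_product_of_short_loops
    {X : Type*} [MetricSpace X] [CompleteSpace X] (hX : IsLengthSpace X)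
    (q : X) (δ : ℝ) (hδ : 0 < δ) {x : X} (C : Path x x)
    (hrect : pathLength C < ⊤)
    (himage : Set.range C ⊆ ball q δ) :
    ∃ L : List (Path q q), (∀ p ∈ L, pathLength p < ENNReal.ofReal (2 * δ)) ∧
      FreelyHomotopicLoops C (loopProduct L) :=
  loop_in_ball_freely_homotopic_to_product_of_short_loops_general hX q δ C hrect himage
end

section
/- Let (K, d) be a compact metric space, 𝒟 the space of nonempty closed subsets of [0,D] containing 0 with the Hausdorff metric, and F : K → 𝒟 a continuous map. Then for every ε > 0 there exist finitely many elements A₁, …, A_N ∈ F(K) and radii ε₁, …, ε_N > 0 such that for every x ∈ K there is some i with F(x) contained in the open ε_i-neighborhood of A_i, and each ε_i-neighborhood T_{ε_i}(A_i) ⊂ [0,D] has Lebesgue measure less than ε. -/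
open Metric MeasureTheory

/-!
Each `F x` is closed and countable (away from `0` it is finite at every scale), hence
Lebesgue-null, so its thin thickenings have small measure. Choosing such a radius for every
`x`, continuity of `F` for the Hausdorff distance and compactness of `K` let finitely many of
these thickenings capture every `F x`.
-/

theorem Set.countable_of_finite_inter_Icc {A : Set ℝ} {D : ℝ} (hA : A ⊆ Set.Icc 0 D)
    (hfin : ∀ δ > 0, (A ∩ Set.Icc δ D).Finite) : A.Countable := by
  have hcover : A ⊆ {0} ∪ ⋃ n : ℕ, A ∩ Set.Icc (1 / (n + 1)) D := by
    intro a ha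
    rcases (hA ha).1.eq_or_lt with rfl | hpos
    · exact Or.inl rfl
    obtain ⟨n, hn⟩ := exists_nat_one_div_lt hpos
    exact Or.inr (Set.mem_iUnion.2 ⟨n, ha, hn.le, (hA ha).2⟩)
  refine .mono hcover ((Set.countable_singleton 0).union (Set.countable_iUnion fun n => ?_))
  exact (hfin _ Nat.one_div_pos_of_nat).countable

theorem exists_pos_measure_thickening_lt {α : Type*} [PseudoMetricSpace α] [MeasurableSpace α]
    [OpensMeasurableSpace α] {μ : Measure α} {s : Set α} {ε : ENNReal}
    (hs : ∃ R > 0, μ (thickening R s) ≠ ⊤) (hclosed : IsClosed s) (hμ : μ s < ε) :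
    ∃ r > 0, μ (thickening r s) < ε :=
  (((tendsto_measure_thickening_of_isClosed hs hclosed).eventually (gt_mem_nhds hμ)).and
    self_mem_nhdsWithin).exists.imp fun _ h => ⟨h.2, h.1⟩

theorem Metric.subset_thickening_of_hausdorffDist_lt {α : Type*} [PseudoMetricSpace α]
    {s t : Set α} {r : ℝ} (fin : hausdorffEDist s t ≠ ⊤) (H : hausdorffDist s t < r) :
    s ⊆ thickening r t := fun _ hx =>
  mem_thickening_iff.2 (exists_dist_lt_of_hausdorffDist_lt hx H fin)

theorem exists_finset_forall_subset_thickening {K α : Type*} [PseudoMetricSpace K]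
    [CompactSpace K] [PseudoMetricSpace α] {F : K → Set α} (hne : ∀ x, (F x).Nonempty)
    (hbdd : ∀ x, Bornology.IsBounded (F x))
    (hcont : ∀ (x : K), ∀ ε > 0, ∃ δ > 0, ∀ y : K, dist x y < δ →
      hausdorffDist (F x) (F y) < ε)
    {r : K → ℝ} (hr : ∀ x, 0 < r x) :
    ∃ s : Finset K, ∀ x, ∃ y ∈ s, F x ⊆ thickening (r y) (F y) := by
  choose δ hδ hδF using fun y => hcont y (r y) (hr y)
  obtain ⟨s, -, hs⟩ := isCompact_univ.elim_nhds_subcover (fun y => ball y (δ y))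
    fun y _ => ball_mem_nhds y (hδ y)
  refine ⟨s, fun x => ?_⟩
  obtain ⟨y, hy, hxy⟩ := Set.mem_iUnion₂.1 (hs (Set.mem_univ x))
  refine ⟨y, hy, subset_thickening_of_hausdorffDist_lt ?_ ?_⟩
  · exact hausdorffEDist_ne_top_of_nonempty_of_bounded (hne x) (hne y) (hbdd x) (hbdd y)
  · rw [hausdorffDist_comm]
    exact hδF y x (mem_ball'.1 hxy)

theorem clumping_of_spectra_general {K : Type*} [MetricSpace K] [CompactSpace K]
    (D : ℝ) (F : K → Set ℝ)
    (hclosed : ∀ x, IsClosed (F x)) (hzero : ∀ x, (0 : ℝ) ∈ F x)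
    (hsub : ∀ x, F x ⊆ Set.Icc 0 D)
    (hdiscF : ∀ x, ∀ δ > 0, (F x ∩ Set.Icc δ D).Finite)
    (hcont : ∀ (x : K), ∀ ε > 0, ∃ δ > 0, ∀ y : K, dist x y < δ →
      hausdorffDist (F x) (F y) < ε) :
    ∀ ε > 0, ∃ (N : ℕ) (A : Fin N → Set ℝ) (r : Fin N → ℝ),
      (∀ i, ∃ x : K, F x = A i) ∧ (∀ i, 0 < r i) ∧
      (∀ x : K, ∃ i, F x ⊆ thickening (r i) (A i)) ∧
      (∀ i, volume (thickening (r i) (A i) ∩ Set.Icc 0 D) < ENNReal.ofReal ε) := by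
  intro ε hε
  have hbdd : ∀ x, Bornology.IsBounded (F x) := fun x => (isBounded_Icc 0 D).subset (hsub x)
  have hnull : ∀ x, volume (F x) = 0 := fun x =>
    ((Set.countable_of_finite_inter_Icc (hsub x) (hdiscF x)).measure_zero volume)
  choose r hr hrvol using fun x => exists_pos_measure_thickening_lt
    ⟨1, one_pos, ((hbdd x).thickening.measure_lt_top).ne⟩ (hclosed x)
    ((hnull x).trans_lt (ENNReal.ofReal_pos.2 hε))
  obtain ⟨s, hs⟩ := exists_finset_forall_subset_thickening (fun x => ⟨0, hzero x⟩) hbdd hcont hr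
  refine ⟨s.card, fun i => F (s.equivFin.symm i), fun i => r (s.equivFin.symm i),
    fun i => ⟨_, rfl⟩, fun i => hr _, fun x => ?_,
    fun i => (measure_mono Set.inter_subset_left).trans_lt (hrvol _)⟩
  obtain ⟨y, hy, hxy⟩ := hs x
  exact ⟨s.equivFin ⟨y, hy⟩, by simpa only [Equiv.symm_apply_apply] using hxy⟩

/-- clumping: If `K` is compact and `F` maps `K` continuously (for the
Hausdorff distance) into the closed subsets of `[0,D]` containing `0`, then for every
`ε > 0` there are finitely many values `A₁, …, A_N` of `F` and radii `ε_i > 0` such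
that every `F(x)` is contained in the open `ε_i`-neighborhood of some `A_i`, and each
such neighborhood within `[0,D]` has Lebesgue measure less than `ε`. -/
theorem clumping_of_spectra {K : Type*} [MetricSpace K] [CompactSpace K] [Nonempty K]
    (D : ℝ) (hD : 0 < D) (F : K → Set ℝ)
    (hclosed : ∀ x, IsClosed (F x)) (hzero : ∀ x, (0 : ℝ) ∈ F x)
    (hsub : ∀ x, F x ⊆ Set.Icc 0 D)
    (hdiscF : ∀ x, ∀ δ > 0, (F x ∩ Set.Icc δ D).Finite)
    (hcont : ∀ (x : K), ∀ ε > 0, ∃ δ > 0, ∀ y : K, dist x y < δ →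
      hausdorffDist (F x) (F y) < ε) :
    ∀ ε > 0, ∃ (N : ℕ) (A : Fin N → Set ℝ) (r : Fin N → ℝ),
      (∀ i, ∃ x : K, F x = A i) ∧ (∀ i, 0 < r i) ∧
      (∀ x : K, ∃ i, F x ⊆ thickening (r i) (A i)) ∧
      (∀ i, volume (thickening (r i) (A i) ∩ Set.Icc 0 D) < ENNReal.ofReal ε) :=
  clumping_of_spectra_general D F hclosed hzero hsub hdiscF hcont
end
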